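/- Let F be a payment-free Shapley operator and let u ∈ ℝⁿ be a fixed point of F. Set I := argmin u = { i ∈ S : u_i = min_j u_j } and J := argmax u = { i ∈ S : u_i = max_j u_j }. Then F(𝟏_{S∖I}) ≤ 𝟏_{S∖I} and 𝟏_J ≤ F(𝟏_J). -/

import Mathlib

/-- The payment-free Shapley operator associated with transition probabilities `P`. -/
noncomputable def paymentFreeShapley {n : ℕ} {A : Fin n → Type*} {B : ∀ i, A i → Type*}
    [∀ i, Fintype (A i)] [∀ i, Nonempty (A i)]
    [∀ i a, Fintype (B i a)] [∀ i a, Nonempty (B i a)]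
    (P : ∀ i (a : A i), B i a → Fin n → ℝ) :
    (Fin n → ℝ) → (Fin n → ℝ) :=
  fun x i => ⨅ a : A i, ⨆ b : B i a, ∑ j, P i a b j * x j

/-- The indicator vector `𝟏_K` of a set of states `K`. -/
noncomputable def indic {n : ℕ} (K : Set (Fin n)) : Fin n → ℝ :=
  K.indicator fun _ => (1 : ℝ)

/-- The family `𝓕⁻ = { I ⊆ S : F(𝟏_{S∖I}) ≤ 𝟏_{S∖I} }`. -/
def Fminus {n : ℕ} (F : (Fin n → ℝ) → (Fin n → ℝ)) : Set (Set (Fin n)) :=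
  {I | F (indic Iᶜ) ≤ indic Iᶜ}

/-- The family `𝓕⁺ = { J ⊆ S : 𝟏_J ≤ F(𝟏_J) }`. -/
def Fplus {n : ℕ} (F : (Fin n → ℝ) → (Fin n → ℝ)) : Set (Set (Fin n)) :=
  {J | indic J ≤ F (indic J)}

/-- `Φ(I)`, the union of all `J ∈ 𝓕⁺` disjoint from `I`. -/
def Phi {n : ℕ} (F : (Fin n → ℝ) → (Fin n → ℝ)) (I : Set (Fin n)) : Set (Fin n) :=
  ⋃₀ {J | J ∈ Fplus F ∧ I ∩ J = ∅}

/-- `Φ*(J)`, the union of all `I ∈ 𝓕⁻` disjoint from `J`. -/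
def PhiStar {n : ℕ} (F : (Fin n → ℝ) → (Fin n → ℝ)) (J : Set (Fin n)) : Set (Fin n) :=
  ⋃₀ {I | I ∈ Fminus F ∧ I ∩ J = ∅}

/-!
A probability average of `u` that is at most `min u` charges only the states where `u`
attains its minimum. Hence at a state of `argmin u`, where `F u = u = min u`, the minimizer
has an action after which every answer of the maximizer stays in `argmin u`: this gives
`F(𝟏_{S∖argmin u}) = 0` there. Dually, at a state of `argmax u` the maximizer can answer
every action with transitions that stay in `argmax u`, so `F(𝟏_{argmax u}) = 1` there. Off
these faces the inequalities hold because `F` maps `[0, 1]ⁿ` into itself.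
-/

section WeightedAverage

variable {ι : Type*} [Fintype ι] {p u : ι → ℝ} {m : ℝ}

lemma eq_zero_of_sum_mul_le_of_forall_le (hp0 : ∀ j, 0 ≤ p j) (hp1 : ∑ j, p j = 1)
    (hm : ∀ j, m ≤ u j) (hsum : ∑ j, p j * u j ≤ m) {j : ι} (hj : m < u j) : p j = 0 := by
  have hterm : ∀ k ∈ Finset.univ, 0 ≤ p k * (u k - m) := fun k _ =>
    mul_nonneg (hp0 k) (sub_nonneg.2 (hm k))
  have hzero : ∑ k, p k * (u k - m) = 0 := by
    refine le_antisymm ?_ (Finset.sum_nonneg hterm)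
    simp only [mul_sub, Finset.sum_sub_distrib, ← Finset.sum_mul, hp1, one_mul]
    linarith
  have := (Finset.sum_eq_zero_iff_of_nonneg hterm).1 hzero j (Finset.mem_univ j)
  exact (mul_eq_zero.1 this).resolve_right (sub_ne_zero.2 hj.ne')

lemma eq_zero_of_le_sum_mul_of_forall_le (hp0 : ∀ j, 0 ≤ p j) (hp1 : ∑ j, p j = 1)
    (hm : ∀ j, u j ≤ m) (hsum : m ≤ ∑ j, p j * u j) {j : ι} (hj : u j < m) : p j = 0 :=
  eq_zero_of_sum_mul_le_of_forall_le (u := -u) (m := -m) hp0 hp1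
    (fun k => neg_le_neg (hm k)) (by simpa [Finset.sum_neg_distrib] using hsum)
    (neg_lt_neg hj)

end WeightedAverage

section Indicator

variable {n : ℕ} {K : Set (Fin n)} {p : Fin n → ℝ}

lemma indic_nonneg (j : Fin n) : 0 ≤ indic K j :=
  Set.indicator_nonneg (fun _ _ => zero_le_one) j

lemma indic_le_one (j : Fin n) : indic K j ≤ 1 :=
  Set.indicator_le_self' (fun _ _ => zero_le_one) j

lemma sum_mul_indic_eq_zero (h : ∀ j ∈ K, p j = 0) : ∑ j, p j * indic K j = 0 :=
  Finset.sum_eq_zero fun j _ => by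
    by_cases hj : j ∈ K <;> simp [indic, hj, h]

lemma sum_mul_indic_eq_sum (h : ∀ j ∉ K, p j = 0) : ∑ j, p j * indic K j = ∑ j, p j :=
  Finset.sum_congr rfl fun j _ => by
    by_cases hj : j ∈ K <;> simp [indic, hj, h]

end Indicator

namespace paymentFreeShapley

variable {n : ℕ} {A : Fin n → Type*} {B : ∀ i, A i → Type*}
  [∀ i, Fintype (A i)] [∀ i, Nonempty (A i)]
  [∀ i a, Fintype (B i a)] [∀ i a, Nonempty (B i a)]
  {P : ∀ i (a : A i), B i a → Fin n → ℝ} {x : Fin n → ℝ} {i : Fin n} {c : ℝ}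

lemma apply_le_iff :
    paymentFreeShapley P x i ≤ c ↔ ∃ a, ∀ b, ∑ j, P i a b j * x j ≤ c := by
  constructor
  · intro h
    obtain ⟨a, ha⟩ := exists_eq_ciInf_of_finite (f := fun a : A i => ⨆ b : B i a, ∑ j, P i a b j * x j)
    refine ⟨a, fun b => ?_⟩
    exact (le_ciSup (Set.finite_range _).bddAbove b).trans (ha.trans_le h)
  · rintro ⟨a, ha⟩
    exact ciInf_le_of_le (Set.finite_range _).bddBelow a (ciSup_le ha)

lemma le_apply_iff :
    c ≤ paymentFreeShapley P x i ↔ ∀ a, ∃ b, c ≤ ∑ j, P i a b j * x j := by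
  refine (le_ciInf_iff (Set.finite_range _).bddBelow).trans (forall_congr' fun a => ?_)
  constructor
  · intro h
    obtain ⟨b, hb⟩ := exists_eq_ciSup_of_finite (f := fun b : B i a => ∑ j, P i a b j * x j)
    exact ⟨b, h.trans_eq hb.symm⟩
  · rintro ⟨b, hb⟩
    exact le_ciSup_of_le (Set.finite_range _).bddAbove b hb

lemma apply_le_of_forall_le (hP0 : ∀ i a b j, 0 ≤ P i a b j)
    (hP1 : ∀ i a b, ∑ j, P i a b j = 1) (hx : ∀ j, x j ≤ c) :
    paymentFreeShapley P x i ≤ c := by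
  obtain ⟨a⟩ := ‹∀ i, Nonempty (A i)› i
  refine apply_le_iff.2 ⟨a, fun b => ?_⟩
  calc ∑ j, P i a b j * x j ≤ ∑ j, P i a b j * c :=
        Finset.sum_le_sum fun j _ => mul_le_mul_of_nonneg_left (hx j) (hP0 i a b j)
    _ = c := by rw [← Finset.sum_mul, hP1, one_mul]

lemma le_apply_of_forall_le (hP0 : ∀ i a b j, 0 ≤ P i a b j)
    (hP1 : ∀ i a b, ∑ j, P i a b j = 1) (hx : ∀ j, c ≤ x j) :
    c ≤ paymentFreeShapley P x i := by
  refine le_apply_iff.2 fun a => ?_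
  obtain ⟨b⟩ := ‹∀ i a, Nonempty (B i a)› i a
  refine ⟨b, ?_⟩
  calc c = ∑ j, P i a b j * c := by rw [← Finset.sum_mul, hP1, one_mul]
    _ ≤ ∑ j, P i a b j * x j :=
        Finset.sum_le_sum fun j _ => mul_le_mul_of_nonneg_left (hx j) (hP0 i a b j)

end paymentFreeShapley

open paymentFreeShapley

/-- if `u` is a fixed point of a payment-free Shapley operator `F`, and
`I = argmin u`, `J = argmax u`, then `F(𝟏_{S∖I}) ≤ 𝟏_{S∖I}` and `𝟏_J ≤ F(𝟏_J)`. -/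
theorem invariant_faces_of_fixedPoint
    {n : ℕ} {A : Fin n → Type*} {B : ∀ i, A i → Type*}
    [∀ i, Fintype (A i)] [∀ i, Nonempty (A i)]
    [∀ i a, Fintype (B i a)] [∀ i a, Nonempty (B i a)]
    (P : ∀ i (a : A i), B i a → Fin n → ℝ)
    (hP0 : ∀ i a b j, 0 ≤ P i a b j)
    (hP1 : ∀ i a b, ∑ j, P i a b j = 1)
    (u : Fin n → ℝ) (hu : paymentFreeShapley P u = u) :
    paymentFreeShapley P (indic {i : Fin n | ∀ j, u i ≤ u j}ᶜ)
        ≤ indic {i : Fin n | ∀ j, u i ≤ u j}ᶜ ∧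
    indic {i : Fin n | ∀ j, u j ≤ u i}
        ≤ paymentFreeShapley P (indic {i : Fin n | ∀ j, u j ≤ u i}) := by
  set I : Set (Fin n) := {i : Fin n | ∀ j, u i ≤ u j}
  set J : Set (Fin n) := {i : Fin n | ∀ j, u j ≤ u i}
  constructor
  · intro i
    by_cases hi : i ∈ I
    · obtain ⟨a, ha⟩ := apply_le_iff.1 (congrFun hu i).le
      rw [indic, Set.indicator_of_notMem (Set.notMem_compl_iff.2 hi)]
      refine apply_le_iff.2 ⟨a, fun b => (sum_mul_indic_eq_zero fun j hj => ?_).le⟩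
      obtain ⟨k, hk⟩ : ∃ k, u k < u j := by simpa [I] using hj
      exact eq_zero_of_sum_mul_le_of_forall_le (hP0 i a b) (hP1 i a b) hi (ha b)
        ((hi k).trans_lt hk)
    · rw [indic, Set.indicator_of_mem (Set.mem_compl hi)]
      exact apply_le_of_forall_le hP0 hP1 indic_le_one
  · intro i
    by_cases hi : i ∈ J
    · rw [indic, Set.indicator_of_mem hi]
      refine le_apply_iff.2 fun a => ?_
      obtain ⟨b, hb⟩ := le_apply_iff.1 (congrFun hu i).ge a
      refine ⟨b, (sum_mul_indic_eq_sum fun j hj => ?_).trans (hP1 i a b) |>.ge⟩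
      obtain ⟨k, hk⟩ : ∃ k, u j < u k := by simpa [J] using hj
      exact eq_zero_of_le_sum_mul_of_forall_le (hP0 i a b) (hP1 i a b) hi hb
        (hk.trans_le (hi k))
    · rw [indic, Set.indicator_of_notMem hi]
      exact le_apply_of_forall_le hP0 hP1 indic_nonneg
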